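/- Let X, Y be real normed linear spaces and x ∈ X nonzero. A bounded linear operator T : X → Y preserves Birkhoff-James orthogonality at x (i.e., T(x^⊥_B) ⊆ (Tx)^⊥_B) if and only if for each associated cone V of x there exists a convex set S ⊆ (Tx)^⊥_B with T(V) ⊆ S. -/

import Mathlib

/-!
If `y` lies in an associated cone `V_{fg}`, the functional `h ↦ h y` changes sign on the segment
`[f, g] ⊆ J(x)`, so some support functional at `x` vanishes at `y`, whence `x ⊥_B y`. Thus
`V_{fg} ⊆ x^⊥_B`, and `S = T(V_{fg})` works when `T` preserves orthogonality at `x`.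

Conversely, if `x ⊥_B y` then `‖x‖` equals the norm of the class of `x` in `X ⧸ ℝ ∙ y`, and a
Hahn–Banach functional norming that class gives a support functional `f₀` at `x` with
`f₀ y = 0` (James). `J(x)` is weak-* compact and convex, so by Bauer's maximum principle
`h ↦ h y` attains its maximum on `J(x)` at an extreme point `f` and its minimum at an extreme
point `g`. Then `f y ≥ 0 ≥ g y`, i.e. `y ∈ V_{fg}`, and `Ty ∈ T(V_{fg}) ⊆ S ⊆ (Tx)^⊥_B`.
-/

/-- Birkhoff-James orthogonality. -/
def BJOrth {X : Type*} [NormedAddCommGroup X] [NormedSpace ℝ X] (x y : X) : Prop :=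
  ∀ t : ℝ, ‖x‖ ≤ ‖x + t • y‖

/-- The set of support functionals at `x`. -/
def suppFun {X : Type*} [NormedAddCommGroup X] [NormedSpace ℝ X] (x : X) :
    Set (X →L[ℝ] ℝ) := {f | ‖f‖ = 1 ∧ f x = ‖x‖}

open Set

theorem exists_mem_segment_apply_eq_zero {𝕜 E : Type*} [Field 𝕜] [LinearOrder 𝕜]
    [IsStrictOrderedRing 𝕜] [AddCommGroup E] [Module 𝕜 E] (ℓ : E →ₗ[𝕜] 𝕜) {a b : E}
    (ha : 0 ≤ ℓ a) (hb : ℓ b ≤ 0) : ∃ c ∈ segment 𝕜 a b, ℓ c = 0 := by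
  have : (0 : 𝕜) ∈ segment 𝕜 (ℓ a) (ℓ b) := by
    rw [segment_eq_uIcc]
    exact mem_uIcc.2 (Or.inr ⟨hb, ha⟩)
  rwa [← LinearMap.coe_toAffineMap, ← image_segment 𝕜 ℓ.toAffineMap] at this

theorem IsCompact.exists_mem_extremePoints_isMaxOn {E : Type*} [AddCommGroup E] [Module ℝ E]
    [TopologicalSpace E] [T2Space E] [IsTopologicalAddGroup E] [ContinuousSMul ℝ E]
    [LocallyConvexSpace ℝ E] {K : Set E} (hK : IsCompact K) (hne : K.Nonempty)
    (ℓ : StrongDual ℝ E) : ∃ e ∈ K.extremePoints ℝ, IsMaxOn ℓ K e := by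
  have hexp : IsExposed ℝ K (ℓ.toExposed K) := ContinuousLinearMap.toExposed.isExposed
  obtain ⟨a, haK, hmax⟩ := hK.exists_isMaxOn hne ℓ.continuous.continuousOn
  obtain ⟨e, he⟩ := (hexp.isCompact hK).extremePoints_nonempty ⟨a, haK, fun b hb => hmax hb⟩
  exact ⟨e, hexp.isExtreme.extremePoints_subset_extremePoints he,
    fun b hb => (extremePoints_subset he).2 b hb⟩

section SupportFunctionals

variable {X : Type*} [NormedAddCommGroup X] [NormedSpace ℝ X] {x y : X} {f g : X →L[ℝ] ℝ}

def assocCone (f g : X →L[ℝ] ℝ) : Set X := {y | 0 ≤ f y ∧ g y ≤ 0}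

theorem convex_assocCone (f g : X →L[ℝ] ℝ) : Convex ℝ (assocCone f g) :=
  (convex_halfSpace_ge f.toLinearMap.isLinear 0).inter
    (convex_halfSpace_le g.toLinearMap.isLinear 0)

theorem suppFun_eq_closedBall_inter (hx : x ≠ 0) :
    suppFun x = Metric.closedBall 0 1 ∩ {f | f x = ‖x‖} := by
  ext f
  refine ⟨fun hf => ⟨by simpa using hf.1.le, hf.2⟩, fun ⟨hf, hfx⟩ => ⟨?_, hfx⟩⟩
  rw [mem_closedBall_zero_iff] at hf
  refine hf.antisymm ?_
  have := f.le_opNorm x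
  rw [hfx, norm_norm] at this
  exact le_of_mul_le_mul_right (by simpa using this) (norm_pos_iff.2 hx)

theorem suppFun_nonempty (hx : x ≠ 0) : (suppFun x).Nonempty := by
  obtain ⟨f, hf⟩ := exists_dual_vector ℝ x (norm_ne_zero_iff.2 hx)
  exact ⟨f, by simpa [suppFun] using hf⟩

theorem convex_suppFun (hx : x ≠ 0) : Convex ℝ (suppFun x) := by
  rw [suppFun_eq_closedBall_inter hx]
  exact (convex_closedBall 0 1).inter
    (convex_hyperplane (ContinuousLinearMap.apply ℝ ℝ x).toLinearMap.isLinear _)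

theorem isCompact_toWeakDual_image_suppFun (hx : x ≠ 0) :
    IsCompact (StrongDual.toWeakDual '' suppFun x : Set (WeakDual ℝ X)) := by
  rw [LinearEquiv.image_eq_preimage_symm, suppFun_eq_closedBall_inter hx, preimage_inter]
  exact (WeakDual.isCompact_closedBall 0 1).inter_right
    (isClosed_eq (WeakDual.eval_continuous x) continuous_const)

theorem exists_mem_extremePoints_suppFun_isMaxOn (hx : x ≠ 0) (y : X) :
    ∃ f ∈ (suppFun x).extremePoints ℝ, IsMaxOn (fun g : X →L[ℝ] ℝ => g y) (suppFun x) f := by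
  -- `WeakDual` is a non-reducible copy of `WeakBilin`: its local convexity has to be supplied,
  -- and the evaluation functional has to be retyped to carry the `WeakDual` instances.
  have : LocallyConvexSpace ℝ (WeakDual ℝ X) := WeakBilin.locallyConvexSpace
  obtain ⟨φ, hφ, hmax⟩ := (isCompact_toWeakDual_image_suppFun hx).exists_mem_extremePoints_isMaxOn
    ((suppFun_nonempty hx).image _) (show StrongDual ℝ (WeakDual ℝ X) from WeakBilin.eval _ y)
  rw [← image_extremePoints] at hφ
  obtain ⟨f, hf, rfl⟩ := hφ
  exact ⟨f, hf, fun g hg => hmax (mem_image_of_mem _ hg)⟩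

theorem BJOrth.of_mem_suppFun (hf : f ∈ suppFun x) (hfy : f y = 0) : BJOrth x y := fun t =>
  calc ‖x‖ = f (x + t • y) := by simp [hf.2, hfy]
    _ ≤ ‖f‖ * ‖x + t • y‖ := (le_abs_self _).trans (f.le_opNorm _)
    _ = ‖x + t • y‖ := by rw [hf.1, one_mul]

theorem BJOrth.of_mem_assocCone (hx : x ≠ 0) (hf : f ∈ suppFun x) (hg : g ∈ suppFun x)
    (hy : y ∈ assocCone f g) : BJOrth x y := by
  obtain ⟨h, hseg, hhy⟩ :=
    exists_mem_segment_apply_eq_zero (ContinuousLinearMap.apply ℝ ℝ y).toLinearMap hy.1 hy.2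
  exact .of_mem_suppFun ((convex_suppFun hx).segment_subset hf hg hseg) hhy

theorem BJOrth.exists_mem_suppFun_apply_eq_zero (hx : x ≠ 0) (h : BJOrth x y) :
    ∃ f ∈ suppFun x, f y = 0 := by
  set L := ℝ ∙ y
  have hnorm : ‖L.mkQ x‖ = ‖x‖ := by
    refine le_antisymm QuotientAddGroup.norm_mk_le_norm ?_
    refine QuotientAddGroup.le_norm_iff.2 fun m hm => ?_
    obtain ⟨t, ht⟩ := Submodule.mem_span_singleton.1 ((Submodule.Quotient.eq L).1 hm)
    rw [eq_sub_iff_add_eq'] at ht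
    simpa [← ht] using h t
  obtain ⟨φ, hφ, hφx⟩ := exists_dual_vector'' ℝ (L.mkQ x)
  rw [hnorm] at hφx
  refine ⟨φ.comp L.mkQL, ?_, ?_⟩
  · rw [suppFun_eq_closedBall_inter hx, mem_inter_iff, mem_closedBall_zero_iff]
    refine ⟨ContinuousLinearMap.opNorm_le_bound _ zero_le_one fun z => ?_, by simpa using hφx⟩
    calc ‖φ (L.mkQ z)‖ ≤ ‖φ‖ * ‖L.mkQ z‖ := φ.le_opNorm _
      _ ≤ 1 * ‖z‖ := mul_le_mul hφ QuotientAddGroup.norm_mk_le_norm (norm_nonneg _) zero_le_one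
  · simp [(Submodule.Quotient.mk_eq_zero L).2 (Submodule.mem_span_singleton_self y)]

end SupportFunctionals

theorem stmt_2 {X Y : Type*} [NormedAddCommGroup X] [NormedSpace ℝ X]
    [NormedAddCommGroup Y] [NormedSpace ℝ Y]
    (x : X) (hx : x ≠ 0) (T : X →L[ℝ] Y) :
    (∀ y : X, BJOrth x y → BJOrth (T x) (T y)) ↔
      ∀ f ∈ Set.extremePoints ℝ (suppFun x), ∀ g ∈ Set.extremePoints ℝ (suppFun x),
        ∃ S : Set Y, Convex ℝ S ∧ S ⊆ {w : Y | BJOrth (T x) w} ∧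
          T '' {y : X | 0 ≤ f y ∧ g y ≤ 0} ⊆ S := by
  constructor
  · intro hT f hf g hg
    refine ⟨T '' assocCone f g, (convex_assocCone f g).linear_image T.toLinearMap, ?_, subset_rfl⟩
    rintro _ ⟨y, hy, rfl⟩
    exact hT y (.of_mem_assocCone hx (extremePoints_subset hf) (extremePoints_subset hg) hy)
  · intro hS y hxy
    obtain ⟨f₀, hf₀, hf₀y⟩ := hxy.exists_mem_suppFun_apply_eq_zero hx
    obtain ⟨f, hf, hf_max⟩ := exists_mem_extremePoints_suppFun_isMaxOn hx y
    obtain ⟨g, hg, hg_max⟩ := exists_mem_extremePoints_suppFun_isMaxOn hx (-y)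
    have hy : y ∈ assocCone f g := by
      refine ⟨hf₀y ▸ hf_max hf₀, ?_⟩
      have : -f₀ y ≤ -g y := by simpa using hg_max hf₀
      linarith
    obtain ⟨S, -, hS_orth, hTS⟩ := hS f hf g hg
    exact hS_orth (hTS ⟨y, hy, rfl⟩)
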